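/- arXiv:2604.01584 — 4 statements merged into one kernel-verified Lean document; each statement's English description precedes it below -/
import Mathlib

section
/- Temple's inequality: Let H be a self-adjoint operator on a finite-dimensional (or suitable) Hilbert space with smallest eigenvalue E₀ being isolated and non-degenerate, and let E₁ = inf(σ(H) \ {E₀}). If ψ is a unit vector in the domain of H with ⟨ψ, Hψ⟩ < E₁, then E₀ ≥ ⟨ψ, Hψ⟩ − (⟨Hψ, Hψ⟩ − ⟨ψ, Hψ⟩²) / (E₁ − ⟨ψ, Hψ⟩). -/
open scoped RealInnerProductSpace

/-- Temple's inequality. -/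
theorem temple_inequality
    {E : Type*} [NormedAddCommGroup E] [InnerProductSpace ℝ E] [FiniteDimensional ℝ E]
    (H : E →ₗ[ℝ] E) (hH : H.IsSymmetric)
    (E₀ E₁ : ℝ)
    (hE₀ : IsLeast (spectrum ℝ H) E₀)
    (hnd : Module.finrank ℝ ↥(Module.End.eigenspace H E₀) = 1)
    (hE₁ : E₁ = sInf (spectrum ℝ H \ {E₀}))
    (hgap : E₀ < E₁)
    (ψ : E) (hψ : ‖ψ‖ = 1)
    (hlt : ⟪ψ, H ψ⟫ < E₁) :
    E₀ ≥ ⟪ψ, H ψ⟫ - (⟪H ψ, H ψ⟫ - ⟪ψ, H ψ⟫ ^ 2) / (E₁ - ⟪ψ, H ψ⟫) := by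
  classical
  have hfr : Module.finrank ℝ E = Module.finrank ℝ E := rfl
  set b := hH.eigenvectorBasis hfr with hb
  set μ := hH.eigenvalues hfr with hμdef
  have hbdd : BddBelow (spectrum ℝ H \ {E₀}) :=
    ⟨E₀, fun x hx => hE₀.2 hx.1⟩
  have hμ : ∀ i, 0 ≤ (μ i - E₁) * (μ i - E₀) := by
    intro i
    have hspec : μ i ∈ spectrum ℝ H :=
      (hH.hasEigenvalue_eigenvalues hfr i).mem_spectrum
    rcases eq_or_ne (μ i) E₀ with h | h
    · rw [h]; simp
    · have h1 : E₁ ≤ μ i := by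
        rw [hE₁]; exact csInf_le hbdd ⟨hspec, h⟩
      have h0 : E₀ ≤ μ i := hE₀.2 hspec
      nlinarith
  have hsum : (0:ℝ) ≤ ⟪H ψ - E₁ • ψ, H ψ - E₀ • ψ⟫ := by
    rw [← b.sum_inner_mul_inner]
    apply Finset.sum_nonneg
    intro i _
    have happ : H (b i) = μ i • b i := hH.apply_eigenvectorBasis hfr i
    have h1 : ⟪H ψ - E₁ • ψ, b i⟫ = (μ i - E₁) * ⟪ψ, b i⟫ := by
      rw [inner_sub_left, hH ψ (b i), happ, real_inner_smul_right,
        real_inner_smul_left]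
      ring
    have h2 : ⟪b i, H ψ - E₀ • ψ⟫ = (μ i - E₀) * ⟪b i, ψ⟫ := by
      rw [inner_sub_right, ← hH (b i) ψ, happ, real_inner_smul_left,
        real_inner_smul_right]
      ring
    rw [h1, h2, real_inner_comm (b i) ψ]
    nlinarith [hμ i, sq_nonneg (⟪b i, ψ⟫ : ℝ)]
  have hnorm : ⟪ψ, ψ⟫ = (1:ℝ) := by
    rw [real_inner_self_eq_norm_sq, hψ]; norm_num
  have hsym : ⟪H ψ, ψ⟫ = ⟪ψ, H ψ⟫ := real_inner_comm _ _
  simp only [inner_sub_left, inner_sub_right, real_inner_smul_left,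
    real_inner_smul_right, hnorm, hsym] at hsum
  have hd : (0:ℝ) < E₁ - ⟪ψ, H ψ⟫ := sub_pos.mpr hlt
  rw [ge_iff_le, sub_le_iff_le_add, ← sub_le_iff_le_add', le_div_iff₀ hd]
  nlinarith [hsum]
end

section
/- Combes–Thomas type estimate (abstract version): Let H be a self-adjoint operator on ℓ²(Λ) for a finite set Λ with a metric d, let z ∈ ℂ with μ = dist(z, σ(H)) > 0, and suppose for some α > 0 that S_α := sup_x Σ_y |H(x,y)| (e^{α d(x,y)} − 1) < μ. Then for all x, y ∈ Λ, |⟨δ_x, (H − z)⁻¹ δ_y⟩| ≤ (μ − S_α)⁻¹ e^{−α d(x,y)}. -/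
/-!
Fix `y` and conjugate by the multiplication operator `e^φ`, `φ u = a d(u, y)`. Since `φ` is
`a`-Lipschitz, `e^φ (H - z) e^{-φ} - (H - z)` has kernel `H(u,v) (e^{φ u - φ v} - 1)`, bounded
entrywise by `|H(u,v)| (e^{a d(u,v)} - 1)`, so by Schur's test (rows and columns agree as `H` is
self-adjoint) its norm is at most `S_a`. For the normal operator `H`, `‖(H - z)⁻¹‖ ≤ 1 / μ`, and a
Neumann series gives `‖(e^φ (H - z) e^{-φ})⁻¹‖ ≤ 1 / (μ - S_a)`. Finally
`(H - z)⁻¹ = e^{-φ} (e^φ (H - z) e^{-φ})⁻¹ e^φ`, whose `(x, y)` entry picks up the factor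
`e^{-φ x + φ y} = e^{-a d(x, y)}`.
-/

open Metric Finset

local notation "δ" x:max => EuclideanSpace.single x (1 : ℂ)

lemma Ring.inverse_units_conj {M₀ : Type*} [MonoidWithZero M₀] (d : M₀ˣ) (c : M₀) :
    Ring.inverse (↑d * c * ↑d⁻¹) = ↑d * Ring.inverse c * ↑d⁻¹ := by
  rw [Ring.inverse_mul (.inr d⁻¹.isUnit), Ring.inverse_mul (.inl d.isUnit), Ring.inverse_unit,
    Ring.inverse_unit, inv_inv, mul_assoc]

lemma norm_ringInverse_le_of_norm_sub_le {R : Type*} [NormedRing R] [HasSummableGeomSeries R]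
    [NormOneClass R] {c c' : R} {μ S : ℝ} (hc : IsUnit c) (hc_inv : ‖Ring.inverse c‖ ≤ μ⁻¹)
    (hc' : ‖c' - c‖ ≤ S) (hSμ : S < μ) : ‖Ring.inverse c'‖ ≤ (μ - S)⁻¹ := by
  have hμ : 0 < μ := (norm_nonneg _).trans hc' |>.trans_lt hSμ
  set s := -(Ring.inverse c * (c' - c))
  have hs : ‖s‖ ≤ μ⁻¹ * S := by
    rw [norm_neg]
    exact (norm_mul_le _ _).trans (mul_le_mul hc_inv hc' (norm_nonneg _) (by positivity))
  have hs1 : μ⁻¹ * S < 1 := by rwa [inv_mul_lt_one₀ hμ]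
  have hfactor : c' = c * (1 - s) := by
    rw [mul_sub, mul_one, mul_neg, sub_neg_eq_add, ← mul_assoc, Ring.mul_inverse_cancel c hc,
      one_mul, add_sub_cancel]
  have hgeom : ‖Ring.inverse (1 - s)‖ ≤ (1 - μ⁻¹ * S)⁻¹ := by
    rw [← geom_series_eq_inverse s (hs.trans_lt hs1)]
    refine (tsum_geometric_le_of_norm_lt_one s (hs.trans_lt hs1)).trans ?_
    rw [norm_one, sub_self, zero_add]
    gcongr
  calc ‖Ring.inverse c'‖
      = ‖Ring.inverse (1 - s) * Ring.inverse c‖ := by rw [hfactor, Ring.inverse_mul (.inl hc)]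
    _ ≤ (1 - μ⁻¹ * S)⁻¹ * μ⁻¹ :=
        (norm_mul_le _ _).trans (mul_le_mul hgeom hc_inv (norm_nonneg _) (by positivity))
    _ = (μ - S)⁻¹ := by
        rw [← mul_inv]
        congr 1
        field_simp

lemma isUnit_sub_smul_one_of_notMem_spectrum {R A : Type*} [CommRing R] [Ring A] [Algebra R A]
    {a : A} {z : R} (hz : z ∉ spectrum R a) : IsUnit (a - z • 1) := by
  simpa [Algebra.algebraMap_eq_smul_one] using (spectrum.notMem_iff.mp hz).neg

lemma norm_ringInverse_sub_smul_one_le {A : Type*} [CStarAlgebra A] (a : A) [IsStarNormal a]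
    {z : ℂ} (hz : 0 < infDist z (spectrum ℂ a)) :
    ‖Ring.inverse (a - z • 1)‖ ≤ (infDist z (spectrum ℂ a))⁻¹ := by
  have hne : ∀ x ∈ spectrum ℂ a, x - z ≠ 0 := by
    rintro x hx h
    rw [← sub_eq_zero.mp h, infDist_zero_of_mem hx] at hz
    exact hz.false
  have hcfc : cfc (fun x : ℂ => x - z) a = a - z • 1 := by
    rw [cfc_sub .., cfc_id' .., cfc_const .., Algebra.algebraMap_eq_smul_one]
  rw [← hcfc, ← cfc_inv _ _ hne]
  refine norm_cfc_le (by positivity) fun x hx => ?_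
  rw [norm_inv, ← dist_eq_norm, dist_comm]
  exact inv_anti₀ hz (infDist_le_dist_of_mem hx)

lemma Real.abs_exp_sub_one_le_exp_abs_sub_one (s : ℝ) : |Real.exp s - 1| ≤ Real.exp |s| - 1 := by
  rcases le_total 0 s with hs | hs
  · rw [abs_of_nonneg hs, abs_of_nonneg (by simpa using Real.one_le_exp hs)]
  · rw [abs_of_nonpos hs, abs_of_nonpos (by simpa using Real.exp_le_one_iff.2 hs)]
    linarith [Real.add_one_le_exp s, Real.add_one_le_exp (-s)]

section EuclideanSpace

variable {Λ : Type*} [Fintype Λ] [DecidableEq Λ]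

local notation "E" => EuclideanSpace ℂ Λ

lemma ContinuousLinearMap.apply_eq_sum_apply_single (M : E →L[ℂ] E) (f : E) (u : Λ) :
    M f u = ∑ v, M (δ v) u * f v := by
  conv_lhs => rw [← (EuclideanSpace.basisFun Λ ℂ).sum_repr f]
  simp [mul_comm]

lemma ContinuousLinearMap.norm_apply_single_le (M : E →L[ℂ] E) (u v : Λ) :
    ‖M (δ v) u‖ ≤ ‖M‖ :=
  calc ‖M (δ v) u‖ ≤ ‖M (δ v)‖ := PiLp.norm_apply_le _ u
    _ ≤ ‖M‖ * ‖δ v‖ := M.le_opNorm _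
    _ = ‖M‖ := by simp

lemma IsSelfAdjoint.norm_apply_single_comm {M : E →L[ℂ] E} (hM : IsSelfAdjoint M) (u v : Λ) :
    ‖M (δ v) u‖ = ‖M (δ u) v‖ := by
  have h := M.adjoint_inner_right (δ u) (δ v)
  rw [hM.adjoint_eq] at h
  simpa [EuclideanSpace.inner_single_left, EuclideanSpace.inner_single_right]
    using congrArg norm h

/-- Schur's test. -/
lemma ContinuousLinearMap.norm_le_of_sum_norm_apply_single_le (M : E →L[ℂ] E) {S : ℝ}
    (hS : 0 ≤ S) (hrow : ∀ u, ∑ v, ‖M (δ v) u‖ ≤ S)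
    (hcol : ∀ v, ∑ u, ‖M (δ v) u‖ ≤ S) : ‖M‖ ≤ S := by
  refine M.opNorm_le_bound hS fun f => ?_
  set m : Λ → Λ → ℝ := fun u v => ‖M (δ v) u‖
  have hrow_sq : ∀ u, ‖M f u‖ ^ 2 ≤ S * ∑ v, m u v * ‖f v‖ ^ 2 := fun u => calc
    ‖M f u‖ ^ 2 ≤ (∑ v, m u v * ‖f v‖) ^ 2 := by
        rw [M.apply_eq_sum_apply_single]
        gcongr
        exact norm_sum_le_of_le _ fun v _ => (norm_mul _ _).le
    _ ≤ (∑ v, m u v) * ∑ v, m u v * ‖f v‖ ^ 2 :=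
        sum_sq_le_sum_mul_sum_of_sq_le_mul _ (fun _ _ => norm_nonneg _)
          (fun _ _ => by positivity) fun _ _ => (by ring : _ = _).le
    _ ≤ S * ∑ v, m u v * ‖f v‖ ^ 2 := by gcongr; exact hrow u
  have hsq : ‖M f‖ ^ 2 ≤ (S * ‖f‖) ^ 2 := calc
    ‖M f‖ ^ 2 = ∑ u, ‖M f u‖ ^ 2 := EuclideanSpace.norm_sq_eq _
    _ ≤ ∑ u, S * ∑ v, m u v * ‖f v‖ ^ 2 := sum_le_sum fun u _ => hrow_sq u
    _ = S * ∑ v, (∑ u, m u v) * ‖f v‖ ^ 2 := by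
        rw [← mul_sum, sum_comm]
        simp_rw [sum_mul]
    _ ≤ S * ∑ v, S * ‖f v‖ ^ 2 := by gcongr with v; exact hcol v
    _ = (S * ‖f‖) ^ 2 := by rw [← mul_sum, ← EuclideanSpace.norm_sq_eq]; ring
  exact (pow_le_pow_iff_left₀ (norm_nonneg _) (by positivity) two_ne_zero).1 hsq

noncomputable def expWeight (φ : Λ → ℝ) : (E →L[ℂ] E)ˣ where
  val := Matrix.toEuclideanCLM (𝕜 := ℂ) (Matrix.diagonal fun u => (Real.exp (φ u) : ℂ))
  inv := Matrix.toEuclideanCLM (𝕜 := ℂ) (Matrix.diagonal fun u => (Real.exp (-φ u) : ℂ))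
  val_inv := by
    simp only [← map_mul, Matrix.diagonal_mul_diagonal, ← Complex.ofReal_mul, ← Real.exp_add,
      add_neg_cancel, Real.exp_zero, Complex.ofReal_one, Matrix.diagonal_one, map_one]
  inv_val := by
    simp only [← map_mul, Matrix.diagonal_mul_diagonal, ← Complex.ofReal_mul, ← Real.exp_add,
      neg_add_cancel, Real.exp_zero, Complex.ofReal_one, Matrix.diagonal_one, map_one]

lemma expWeight_apply (φ : Λ → ℝ) (f : E) (u : Λ) :
    (expWeight φ : E →L[ℂ] E) f u = Real.exp (φ u) * f u := by
  rw [expWeight, Units.val_mk, Matrix.ofLp_toEuclideanCLM, Matrix.mulVec_diagonal]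

lemma expWeight_neg (φ : Λ → ℝ) : expWeight (-φ) = (expWeight φ)⁻¹ := by
  ext1; simp [expWeight]

lemma expWeight_conj_apply_single (φ : Λ → ℝ) (M : E →L[ℂ] E) (u v : Λ) :
    (↑(expWeight φ) * M * ↑(expWeight φ)⁻¹) (δ v) u =
      Real.exp (φ u - φ v) * M (δ v) u := by
  have hinv : (↑(expWeight φ)⁻¹ : E →L[ℂ] E) (δ v) = (Real.exp (-φ v) : ℂ) • δ v := by
    ext w
    rw [← expWeight_neg, expWeight_apply]
    by_cases h : w = v <;> simp [h]
  rw [mul_apply_eq_comp, mul_apply_eq_comp, hinv, map_smul,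
    expWeight_apply, PiLp.smul_apply, smul_eq_mul, Real.exp_sub, Real.exp_neg]
  push_cast
  ring

variable [MetricSpace Λ]

lemma norm_expWeight_conj_sub_apply_single_le (M : E →L[ℂ] E) {φ : Λ → ℝ} {a : ℝ}
    (hφ : ∀ u v, |φ u - φ v| ≤ a * dist u v) (u v : Λ) :
    ‖(↑(expWeight φ) * M * ↑(expWeight φ)⁻¹ - M) (δ v) u‖ ≤
      ‖M (δ v) u‖ * (Real.exp (a * dist u v) - 1) := by
  have hfactor : |Real.exp (φ u - φ v) - 1| ≤ Real.exp (a * dist u v) - 1 :=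
    (Real.abs_exp_sub_one_le_exp_abs_sub_one _).trans (by gcongr; exact hφ u v)
  rw [sub_apply, PiLp.sub_apply, expWeight_conj_apply_single, ← sub_one_mul,
    norm_mul, mul_comm]
  gcongr
  rwa [← Complex.ofReal_one, ← Complex.ofReal_sub, Complex.norm_real]

lemma norm_expWeight_conj_sub_le (M : E →L[ℂ] E) {φ : Λ → ℝ} {a S : ℝ}
    (hφ : ∀ u v, |φ u - φ v| ≤ a * dist u v) (hS : 0 ≤ S)
    (hrow : ∀ u, ∑ v, ‖M (δ v) u‖ * (Real.exp (a * dist u v) - 1) ≤ S)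
    (hcol : ∀ v, ∑ u, ‖M (δ v) u‖ * (Real.exp (a * dist u v) - 1) ≤ S) :
    ‖↑(expWeight φ) * M * ↑(expWeight φ)⁻¹ - M‖ ≤ S :=
  have hentry := norm_expWeight_conj_sub_apply_single_le M hφ
  ContinuousLinearMap.norm_le_of_sum_norm_apply_single_le _ hS
    (fun u => (sum_le_sum fun v _ => hentry u v).trans (hrow u))
    (fun v => (sum_le_sum fun u _ => hentry u v).trans (hcol v))

lemma norm_ringInverse_sub_smul_one_apply_single_le (M : E →L[ℂ] E) {z : ℂ} {μ a S : ℝ}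
    (ha : 0 ≤ a) (hc : IsUnit (M - z • 1)) (hc_inv : ‖Ring.inverse (M - z • 1)‖ ≤ μ⁻¹)
    (hrow : ∀ u, ∑ v, ‖M (δ v) u‖ * (Real.exp (a * dist u v) - 1) ≤ S)
    (hcol : ∀ v, ∑ u, ‖M (δ v) u‖ * (Real.exp (a * dist u v) - 1) ≤ S) (hSμ : S < μ)
    (x y : Λ) :
    ‖Ring.inverse (M - z • 1) (δ y) x‖ ≤ (μ - S)⁻¹ * Real.exp (-a * dist x y) := by
  have hS : 0 ≤ S := (hrow x).trans' <| sum_nonneg fun v _ =>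
    mul_nonneg (norm_nonneg _) (sub_nonneg.2 (Real.one_le_exp (by positivity)))
  set φ : Λ → ℝ := fun u => a * dist u y
  have hφ : ∀ u v, |φ u - φ v| ≤ a * dist u v := fun u v => by
    rw [← mul_sub, abs_mul, abs_of_nonneg ha]
    exact mul_le_mul_of_nonneg_left (abs_dist_sub_le u v y) ha
  set d := expWeight φ
  set c := M - z • (1 : E →L[ℂ] E)
  have : Nonempty Λ := ⟨x⟩
  have hconj : ‖Ring.inverse (↑d * c * ↑d⁻¹)‖ ≤ (μ - S)⁻¹ := by
    refine norm_ringInverse_le_of_norm_sub_le hc hc_inv ?_ hSμ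
    have hsub : ↑d * c * ↑d⁻¹ - c = ↑d * M * ↑d⁻¹ - M := by
      simp [c, mul_sub, sub_mul, smul_mul_assoc]
    exact hsub ▸ norm_expWeight_conj_sub_le M hφ hS hrow hcol
  have hc_eq : Ring.inverse c =
      ↑(expWeight (-φ)) * Ring.inverse (↑d * c * ↑d⁻¹) * ↑(expWeight (-φ))⁻¹ := by
    rw [expWeight_neg, ← Ring.inverse_units_conj, inv_inv]
    simp [d, mul_assoc]
  calc ‖Ring.inverse c (δ y) x‖
      = Real.exp (-a * dist x y) * ‖Ring.inverse (↑d * c * ↑d⁻¹) (δ y) x‖ := by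
        rw [hc_eq, expWeight_conj_apply_single, norm_mul, Complex.norm_real,
          Real.norm_of_nonneg (Real.exp_pos _).le]
        simp [φ, neg_mul]
    _ ≤ Real.exp (-a * dist x y) * (μ - S)⁻¹ := by
        gcongr
        exact (ContinuousLinearMap.norm_apply_single_le _ x y).trans hconj
    _ = (μ - S)⁻¹ * Real.exp (-a * dist x y) := mul_comm _ _

end EuclideanSpace

theorem combes_thomas_abstract_general
    {Λ : Type*} [Fintype Λ] [DecidableEq Λ] [MetricSpace Λ]
    (H : EuclideanSpace ℂ Λ →L[ℂ] EuclideanSpace ℂ Λ) (hH : IsSelfAdjoint H)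
    (z : ℂ) (μ : ℝ) (hμ : μ = Metric.infDist z (spectrum ℂ H)) (hpos : 0 < μ)
    (a : ℝ) (ha : 0 < a) (Sa : ℝ)
    (hSa : Sa = ⨆ x : Λ, ∑ y : Λ,
      ‖(inner ℂ (EuclideanSpace.single x (1 : ℂ)) (H (EuclideanSpace.single y (1 : ℂ))) : ℂ)‖ *
        (Real.exp (a * dist x y) - 1))
    (hlt : Sa < μ) :
    ∀ x y : Λ,
      ‖(inner ℂ (EuclideanSpace.single x (1 : ℂ))
          ((Ring.inverse (H - z • (1 : EuclideanSpace ℂ Λ →L[ℂ] EuclideanSpace ℂ Λ)))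
            (EuclideanSpace.single y (1 : ℂ))) : ℂ)‖ ≤
        (μ - Sa)⁻¹ * Real.exp (-a * dist x y) := by
  intro x y
  simp only [EuclideanSpace.inner_single_left, map_one, one_mul] at hSa ⊢
  have hrow : ∀ u, ∑ v, ‖H (δ v) u‖ * (Real.exp (a * dist u v) - 1) ≤ Sa := fun u => by
    rw [hSa]
    exact le_ciSup (f := fun u => ∑ v, ‖H (δ v) u‖ * (Real.exp (a * dist u v) - 1))
      (Set.finite_range _).bddAbove u
  have hcol : ∀ v, ∑ u, ‖H (δ v) u‖ * (Real.exp (a * dist u v) - 1) ≤ Sa := fun v => by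
    simpa only [hH.norm_apply_single_comm, dist_comm] using hrow v
  have hz : z ∉ spectrum ℂ H := fun h => by simp [hμ, infDist_zero_of_mem h] at hpos
  have := hH.isStarNormal
  exact norm_ringInverse_sub_smul_one_apply_single_le H ha.le
    (isUnit_sub_smul_one_of_notMem_spectrum hz) (hμ ▸ norm_ringInverse_sub_smul_one_le H (hμ ▸ hpos)) hrow hcol hlt x y

/-- abstract Combes–Thomas estimate on ℓ²(Λ) for a finite metric space Λ. -/
theorem combes_thomas_abstract
    {Λ : Type*} [Fintype Λ] [DecidableEq Λ] [Nonempty Λ] [MetricSpace Λ]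
    (H : EuclideanSpace ℂ Λ →L[ℂ] EuclideanSpace ℂ Λ) (hH : IsSelfAdjoint H)
    (z : ℂ) (μ : ℝ) (hμ : μ = Metric.infDist z (spectrum ℂ H)) (hpos : 0 < μ)
    (a : ℝ) (ha : 0 < a) (Sa : ℝ)
    (hSa : Sa = ⨆ x : Λ, ∑ y : Λ,
      ‖(inner ℂ (EuclideanSpace.single x (1 : ℂ)) (H (EuclideanSpace.single y (1 : ℂ))) : ℂ)‖ *
        (Real.exp (a * dist x y) - 1))
    (hlt : Sa < μ) :
    ∀ x y : Λ,
      ‖(inner ℂ (EuclideanSpace.single x (1 : ℂ))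
          ((Ring.inverse (H - z • (1 : EuclideanSpace ℂ Λ →L[ℂ] EuclideanSpace ℂ Λ)))
            (EuclideanSpace.single y (1 : ℂ))) : ℂ)‖ ≤
        (μ - Sa)⁻¹ * Real.exp (-a * dist x y) :=
  combes_thomas_abstract_general H hH z μ hμ hpos a ha Sa hSa hlt
end

section
/- Neumann bracketing inequality: Let U = ∪_{i∈I} B_i be a finite union of finite subsets B_i ⊂ V such that every vertex of U lies in at most C₁ of the sets B_i. Then for every f : U → ℝ, C₁ ⟨f, −Δ^{U,N} f⟩ ≥ Σ_{i∈I} ⟨P_i f, −Δ^{B_i,N} P_i f⟩, where P_i is restriction to B_i. Moreover, if V_ω ≥ 0 is a nonnegative potential, C₁ ⟨f, (−Δ^{U,N} + V_ω) f⟩ ≥ Σ_{i∈I} ⟨P_i f, (−Δ^{B_i,N} + V_ω 1_{B_i}) P_i f⟩. -/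
/-- Overlap counting lemma: if every point of `U` lies in at most `C₁` of the
sets `B i`, and each `B i ⊆ U`, then for nonnegative `g` the sum of `g` over
the pieces is at most `C₁` times the sum over `U`. -/
lemma neumann_bracketing_key {V ι : Type*} [DecidableEq V]
    (I : Finset ι) (B : ι → Finset V) (U : Finset V)
    (hsub : ∀ i ∈ I, B i ⊆ U) (C₁ : ℕ)
    (hover : ∀ x ∈ U, (I.filter (fun i => x ∈ B i)).card ≤ C₁)
    (g : V → ℝ) (hg : ∀ x, 0 ≤ g x) :
    ∑ i ∈ I, ∑ x ∈ B i, g x ≤ (C₁ : ℝ) * ∑ x ∈ U, g x := by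
  have h1 : ∀ i ∈ I, ∑ x ∈ B i, g x = ∑ x ∈ U, if x ∈ B i then g x else 0 := by
    intro i hi
    rw [← Finset.sum_filter]
    congr 1
    ext x
    simp only [Finset.mem_filter]
    exact ⟨fun hx => ⟨hsub i hi hx, hx⟩, fun hx => hx.2⟩
  calc ∑ i ∈ I, ∑ x ∈ B i, g x
      = ∑ i ∈ I, ∑ x ∈ U, if x ∈ B i then g x else 0 := Finset.sum_congr rfl h1
    _ = ∑ x ∈ U, ∑ i ∈ I, if x ∈ B i then g x else 0 := Finset.sum_comm
    _ = ∑ x ∈ U, ((I.filter (fun i => x ∈ B i)).card : ℝ) * g x := by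
        refine Finset.sum_congr rfl fun x _ => ?_
        rw [← Finset.sum_filter, Finset.sum_const, nsmul_eq_mul]
    _ ≤ ∑ x ∈ U, (C₁ : ℝ) * g x := by
        refine Finset.sum_le_sum fun x hx => ?_
        exact mul_le_mul_of_nonneg_right (by exact_mod_cast hover x hx) (hg x)
    _ = (C₁ : ℝ) * ∑ x ∈ U, g x := (Finset.mul_sum _ _ _).symm

/-- Neumann bracketing inequality for quadratic forms, with and
without a nonnegative potential. -/
theorem neumann_bracketing
    {V ι : Type*} [DecidableEq V] (G : SimpleGraph V) [DecidableRel G.Adj]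
    (I : Finset ι) (B : ι → Finset V) (U : Finset V)
    (hU : (U : Set V) = ⋃ i ∈ I, ((B i : Finset V) : Set V))
    (C₁ : ℕ) (hover : ∀ x ∈ U, (I.filter (fun i => x ∈ B i)).card ≤ C₁)
    (W : V → ℝ) (hW : ∀ x, 0 ≤ W x) (f : V → ℝ) :
    (C₁ : ℝ) * ((1 / 2) * ∑ x ∈ U, ∑ y ∈ U, (if G.Adj x y then (f y - f x) ^ 2 else 0))
      ≥ ∑ i ∈ I, (1 / 2) * ∑ x ∈ B i, ∑ y ∈ B i, (if G.Adj x y then (f y - f x) ^ 2 else 0) ∧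
    (C₁ : ℝ) * ((1 / 2) * ∑ x ∈ U, ∑ y ∈ U, (if G.Adj x y then (f y - f x) ^ 2 else 0)
        + ∑ x ∈ U, W x * f x ^ 2)
      ≥ ∑ i ∈ I, ((1 / 2) * ∑ x ∈ B i, ∑ y ∈ B i, (if G.Adj x y then (f y - f x) ^ 2 else 0)
        + ∑ x ∈ B i, W x * f x ^ 2) := by
  -- Each B i (for i ∈ I) is contained in U
  have hsub : ∀ i ∈ I, B i ⊆ U := by
    intro i hi x hx
    have : (x : V) ∈ (U : Set V) := by
      rw [hU]
      exact Set.mem_biUnion hi (by exact_mod_cast hx)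
    exact_mod_cast this
  set e : V → V → ℝ := fun x y => if G.Adj x y then (f y - f x) ^ 2 else 0 with he
  have he_nonneg : ∀ x y, 0 ≤ e x y := by
    intro x y
    simp only [he]
    split
    · positivity
    · exact le_refl 0
  -- inner sum over B i bounded by inner sum over U
  have hinner : ∀ i ∈ I, ∀ x, ∑ y ∈ B i, e x y ≤ ∑ y ∈ U, e x y := by
    intro i hi x
    exact Finset.sum_le_sum_of_subset_of_nonneg (hsub i hi)
      (fun y _ _ => he_nonneg x y)
  -- kinetic term bound
  have hkin : ∑ i ∈ I, ∑ x ∈ B i, ∑ y ∈ B i, e x y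
      ≤ (C₁ : ℝ) * ∑ x ∈ U, ∑ y ∈ U, e x y := by
    calc ∑ i ∈ I, ∑ x ∈ B i, ∑ y ∈ B i, e x y
        ≤ ∑ i ∈ I, ∑ x ∈ B i, ∑ y ∈ U, e x y := by
          refine Finset.sum_le_sum fun i hi => Finset.sum_le_sum fun x _ => ?_
          exact hinner i hi x
      _ ≤ (C₁ : ℝ) * ∑ x ∈ U, ∑ y ∈ U, e x y :=
          neumann_bracketing_key I B U hsub C₁ hover _
            (fun x => Finset.sum_nonneg fun y _ => he_nonneg x y)
  -- potential term bound
  have hpot : ∑ i ∈ I, ∑ x ∈ B i, W x * f x ^ 2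
      ≤ (C₁ : ℝ) * ∑ x ∈ U, W x * f x ^ 2 :=
    neumann_bracketing_key I B U hsub C₁ hover _
      (fun x => mul_nonneg (hW x) (sq_nonneg _))
  simp only [he] at hkin
  constructor
  · rw [ge_iff_le, ← Finset.mul_sum]
    linarith [hkin]
  · rw [ge_iff_le, Finset.sum_add_distrib, ← Finset.mul_sum]
    linarith [hkin, hpot]
end

section
/- Temple inequality application to the truncated Anderson Hamiltonian: Let B ⊂ V be a finite set with |B| = N, let −Δ^N be the Neumann Laplacian on B with first nonzero eigenvalue E₁(−Δ^N) ≥ c₀ r^{−β}, and let W : B → [0, (c₀/3) r^{−β}] be any potential. Set H̃ = −Δ^N + W. Then the smallest eigenvalue satisfies E₀(H̃) ≥ (1/(2N)) Σ_{x∈B} W(x). -/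
/-!
Write a vector as `v = w + a • 1` with `∑ w = 0`. Since the Laplacian kills constants and is
symmetric, `⟪v, (L + W) v⟫ = ⟪w, L w⟫ + ∑ W (a + w)²`, and the spectral gap bounds the first term
by `c ‖w‖²`. The elementary bound `(a + w)² ≥ a² / 2 - w²` and `W ≤ c / 3` then give
`⟪v, (L + W) v⟫ ≥ (mean W / 2) (N a² + ‖w‖²) = (mean W / 2) ‖v‖²`, so every eigenvalue is at
least half the mean of `W`.
-/

open Matrix Finset
open scoped RealInnerProductSpace

theorem Matrix.le_of_mem_spectrum_of_forall_mul_dotProduct_le {n : Type*} [Fintype n]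
    [DecidableEq n] {M : Matrix n n ℝ} {c : ℝ} (h : ∀ v, c * (v ⬝ᵥ v) ≤ v ⬝ᵥ M *ᵥ v) {t : ℝ}
    (ht : t ∈ spectrum ℝ M) : c ≤ t := by
  rw [← spectrum_toLin', ← Module.End.hasEigenvalue_iff_mem_spectrum] at ht
  obtain ⟨v, hv, hv0⟩ := ht.exists_hasEigenvector
  have hMv : M *ᵥ v = t • v := Module.End.mem_eigenspace_iff.mp hv
  have hpos : 0 < v ⬝ᵥ v := by simpa using dotProduct_self_star_pos_iff.mpr hv0
  have hcv := h v
  rw [hMv, dotProduct_smul, smul_eq_mul] at hcv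
  exact le_of_mul_le_mul_right hcv hpos

theorem OrthonormalBasis.mul_inner_self_le_inner_map {ι E : Type*} [Fintype ι]
    [NormedAddCommGroup E] [InnerProductSpace ℝ E] (b : OrthonormalBasis ι ℝ E)
    {T : E →ₗ[ℝ] E} {μ : ι → ℝ} (hT : ∀ i, T (b i) = μ i • b i) {c : ℝ} {x : E}
    (hx : ∀ i, μ i < c → ⟪b i, x⟫ = 0) : c * ⟪x, x⟫ ≤ ⟪x, T x⟫ := by
  have hTx : T x = ∑ i, (μ i * ⟪b i, x⟫) • b i := by
    conv_lhs => rw [← b.sum_repr' x]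
    simp only [map_sum, map_smul, hT, smul_smul, mul_comm]
  have hxx : ⟪x, x⟫ = ∑ i, ⟪b i, x⟫ ^ 2 := by
    rw [← b.sum_inner_mul_inner]
    simp only [real_inner_comm x, sq]
  rw [hxx, hTx, inner_sum, Finset.mul_sum]
  refine Finset.sum_le_sum fun i _ => ?_
  rw [inner_smul_right, real_inner_comm (b i) x, mul_assoc, ← sq]
  rcases lt_or_ge (μ i) c with hi | hi
  · simp [hx i hi]
  · exact mul_le_mul_of_nonneg_right hi (sq_nonneg _)

theorem Matrix.IsHermitian.mul_dotProduct_self_le_of_sum_eq_zero {n : Type*} [Fintype n]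
    [DecidableEq n] {L : Matrix n n ℝ} (hL : L.IsHermitian)
    (hker : ∀ f : n → ℝ, L *ᵥ f = 0 → ∃ c : ℝ, ∀ x, f x = c) {c : ℝ}
    (hgap : ∀ t ∈ spectrum ℝ L, t ≠ 0 → c ≤ t) {w : n → ℝ} (hw : ∑ x, w x = 0) :
    c * (w ⬝ᵥ w) ≤ w ⬝ᵥ L *ᵥ w := by
  have hT : ∀ i, toEuclideanLin L (hL.eigenvectorBasis i) =
      hL.eigenvalues i • hL.eigenvectorBasis i := fun i => by
    rw [toLpLin_apply, hL.mulVec_eigenvectorBasis]; rfl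
  have key := hL.eigenvectorBasis.mul_inner_self_le_inner_map hT (c := c) (x := WithLp.toLp 2 w)
    fun i hi => by
      have h0 : hL.eigenvalues i = 0 := by
        by_contra h; exact (hgap _ (hL.eigenvalues_mem_spectrum_real i) h).not_gt hi
      obtain ⟨k, hk⟩ := hker _ (by rw [hL.mulVec_eigenvectorBasis, h0, zero_smul])
      simp [EuclideanSpace.inner_eq_star_dotProduct, dotProduct, hk, ← Finset.sum_mul, hw]
  simpa only [toLpLin_apply, EuclideanSpace.inner_toLp_toLp, star_trivial, dotProduct_comm w]
    using key

section MeanDecomposition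

variable {n : Type*} [Fintype n]

theorem exists_sum_eq_zero_and_eq_add_smul_one [Nonempty n] (v : n → ℝ) :
    ∃ w : n → ℝ, ∃ a : ℝ, ∑ x, w x = 0 ∧ v = w + a • 1 := by
  have hN : (Fintype.card n : ℝ) ≠ 0 := by positivity
  refine ⟨v - ((∑ x, v x) / Fintype.card n) • 1, (∑ x, v x) / Fintype.card n, ?_, by simp⟩
  simp only [Pi.sub_apply, Pi.smul_apply, Pi.one_apply, smul_eq_mul, mul_one,
    Finset.sum_sub_distrib, Finset.sum_const, Finset.card_univ, nsmul_eq_mul]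
  field_simp
  ring

theorem dotProduct_self_add_smul_one {w : n → ℝ} (hw : ∑ x, w x = 0) (a : ℝ) :
    (w + a • 1) ⬝ᵥ (w + a • 1) = Fintype.card n * a ^ 2 + w ⬝ᵥ w := by
  simp only [add_dotProduct, dotProduct_add, smul_dotProduct, dotProduct_smul, one_dotProduct_one]
  simp only [dotProduct_one, one_dotProduct, hw, smul_eq_mul]
  ring

variable {L : Matrix n n ℝ}

theorem Matrix.IsSymm.dotProduct_mulVec_add_smul_one (hL : L.IsSymm) (hL1 : L *ᵥ 1 = 0)
    (w : n → ℝ) (a : ℝ) : (w + a • 1) ⬝ᵥ L *ᵥ (w + a • 1) = w ⬝ᵥ L *ᵥ w := by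
  have h1L : 1 ⬝ᵥ L *ᵥ w = 0 := by
    rw [dotProduct_mulVec, ← mulVec_transpose, hL.eq, hL1, zero_dotProduct]
  rw [mulVec_add, mulVec_smul, hL1, smul_zero, add_zero, add_dotProduct, smul_dotProduct, h1L,
    smul_zero, add_zero]

theorem mul_dotProduct_self_le_dotProduct_add_diagonal_mulVec [DecidableEq n] (hL : L.IsSymm)
    (hL1 : L *ᵥ 1 = 0) {c : ℝ}
    (hgap : ∀ w : n → ℝ, ∑ x, w x = 0 → c * (w ⬝ᵥ w) ≤ w ⬝ᵥ L *ᵥ w)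
    {W : n → ℝ} (hW₀ : ∀ x, 0 ≤ W x) (hWc : ∀ x, W x ≤ c / 3) (v : n → ℝ) :
    (1 / (2 * (Fintype.card n : ℝ)) * ∑ x, W x) * (v ⬝ᵥ v) ≤ v ⬝ᵥ (L + diagonal W) *ᵥ v := by
  rcases isEmpty_or_nonempty n with hn | hn
  · simp
  obtain ⟨w, a, hw, rfl⟩ := exists_sum_eq_zero_and_eq_add_smul_one v
  set N : ℝ := (Fintype.card n : ℝ)
  set m := 1 / (2 * N) * ∑ x, W x
  have hN : 0 < N := by positivity
  have hc : 0 ≤ c := by linarith [hW₀ hn.some, hWc hn.some]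
  have hmN : ∑ x, W x / 2 = m * N := by
    rw [← Finset.sum_div]; simp only [m]; field_simp
  have hmc : m ≤ c / 6 := by
    have : ∑ x, W x ≤ N * (c / 3) := by
      simpa using Finset.sum_le_card_nsmul Finset.univ W (c / 3) fun x _ => hWc x
    rw [show m = (∑ x, W x) / (2 * N) by ring, div_le_iff₀ (by positivity)]
    linarith
  have hform : (w + a • 1) ⬝ᵥ (L + diagonal W) *ᵥ (w + a • 1) =
      w ⬝ᵥ L *ᵥ w + ∑ x, W x * (a + w x) ^ 2 := by
    rw [add_mulVec, dotProduct_add, hL.dotProduct_mulVec_add_smul_one hL1]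
    simp only [dotProduct, mulVec_diagonal, Pi.add_apply, Pi.smul_apply, Pi.one_apply]
    congr 1
    exact Finset.sum_congr rfl fun x _ => by ring
  -- `(a + w)² + w² - a² / 2 = (a + 2 w)² / 2`
  have hpt : ∀ x, W x / 2 * a ^ 2 + m * w x ^ 2 ≤ c * w x ^ 2 + W x * (a + w x) ^ 2 := fun x => by
    nlinarith [hW₀ x, hWc x, mul_nonneg (hW₀ x) (sq_nonneg (a + 2 * w x)), sq_nonneg (w x)]
  calc m * ((w + a • 1) ⬝ᵥ (w + a • 1)) = ∑ x, (W x / 2 * a ^ 2 + m * w x ^ 2) := by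
        rw [Finset.sum_add_distrib, ← Finset.sum_mul, ← Finset.mul_sum, hmN,
          dotProduct_self_add_smul_one hw]
        simp only [dotProduct, sq]; ring
    _ ≤ ∑ x, (c * w x ^ 2 + W x * (a + w x) ^ 2) := Finset.sum_le_sum fun x _ => hpt x
    _ = c * (w ⬝ᵥ w) + ∑ x, W x * (a + w x) ^ 2 := by
        rw [Finset.sum_add_distrib, ← Finset.mul_sum]; simp only [dotProduct, sq]
    _ ≤ (w + a • 1) ⬝ᵥ (L + diagonal W) *ᵥ (w + a • 1) := by
        rw [hform]; exact add_le_add_left (hgap w hw) _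

end MeanDecomposition

namespace SimpleGraph

variable {V : Type*} [DecidableEq V] (G : SimpleGraph V) [DecidableRel G.Adj] (B : Finset V)

/-- The Laplacian of the subgraph induced on `B` (Neumann boundary condition): edges leaving `B`
do not contribute to the degree. -/
def neumannLaplacian : Matrix B B ℝ :=
  Matrix.of fun x y =>
    if x = y then ((B.filter (fun u => G.Adj ↑x u)).card : ℝ)
    else if G.Adj (↑x : V) (↑y : V) then -1 else 0

theorem isSymm_neumannLaplacian : (G.neumannLaplacian B).IsSymm := by
  ext x y
  by_cases h : x = y <;> simp [neumannLaplacian, h, eq_comm, G.adj_comm]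

theorem neumannLaplacian_mulVec_one : G.neumannLaplacian B *ᵥ 1 = 0 := by
  ext x
  have hsplit : ∀ y : B, G.neumannLaplacian B x y =
      (if x = y then (#{u ∈ B | G.Adj x u} : ℝ) else 0) + (if G.Adj x y then -1 else 0) := by
    intro y
    by_cases h : x = y <;> simp [neumannLaplacian, h]
  simp only [mulVec, dotProduct, Pi.one_apply, mul_one, hsplit, Finset.sum_add_distrib,
    Finset.sum_ite_eq, Finset.mem_univ, if_true, Pi.zero_apply]
  rw [Finset.sum_coe_sort B (fun u => if G.Adj x u then (-1 : ℝ) else 0)]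
  simp [Finset.sum_ite]

end SimpleGraph

theorem temple_truncated_anderson_general
    {V : Type*} [DecidableEq V] (G : SimpleGraph V) [DecidableRel G.Adj]
    (B : Finset V)
    (L : Matrix B B ℝ)
    (hL : ∀ x y : B, L x y =
      if x = y then ((B.filter (fun u => G.Adj ↑x u)).card : ℝ)
      else if G.Adj (↑x : V) (↑y : V) then -1 else 0)
    (c₀ r β : ℝ)
    (hker : ∀ f : B → ℝ, L.mulVec f = 0 → ∃ c : ℝ, ∀ x, f x = c)
    (hgap : ∀ t ∈ spectrum ℝ L, t ≠ 0 → c₀ * r ^ (-β) ≤ t)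
    (W : B → ℝ) (hW : ∀ x, 0 ≤ W x ∧ W x ≤ (c₀ / 3) * r ^ (-β)) :
    ∀ t ∈ spectrum ℝ (L + Matrix.diagonal W),
      (1 / (2 * (B.card : ℝ))) * ∑ x : B, W x ≤ t := by
  obtain rfl : L = G.neumannLaplacian B := Matrix.ext hL
  have hsymm := G.isSymm_neumannLaplacian B
  have hform_gap : ∀ w : B → ℝ, ∑ x, w x = 0 →
      c₀ * r ^ (-β) * (w ⬝ᵥ w) ≤ w ⬝ᵥ G.neumannLaplacian B *ᵥ w := fun w hw =>
    (isHermitian_iff_isSymm.mpr hsymm).mul_dotProduct_self_le_of_sum_eq_zero hker hgap hw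
  intro t ht
  refine le_of_mem_spectrum_of_forall_mul_dotProduct_le (fun v => ?_) ht
  rw [← Fintype.card_coe B]
  exact mul_dotProduct_self_le_dotProduct_add_diagonal_mulVec hsymm
    (G.neumannLaplacian_mulVec_one B) hform_gap (fun x => (hW x).1)
    (fun x => (hW x).2.trans_eq (by ring)) v

/-- Temple inequality applied to the truncated Anderson Hamiltonian:
the ground state energy of the Neumann Laplacian plus a small truncated potential is
at least half the mean of the potential. -/
theorem temple_truncated_anderson
    {V : Type*} [DecidableEq V] (G : SimpleGraph V) [DecidableRel G.Adj]
    (B : Finset V) (hB : B.Nonempty)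
    (L : Matrix B B ℝ)
    (hL : ∀ x y : B, L x y =
      if x = y then ((B.filter (fun u => G.Adj ↑x u)).card : ℝ)
      else if G.Adj (↑x : V) (↑y : V) then -1 else 0)
    (c₀ r β : ℝ) (hc₀ : 0 < c₀) (hr : 0 < r)
    (hker : ∀ f : B → ℝ, L.mulVec f = 0 → ∃ c : ℝ, ∀ x, f x = c)
    (hgap : ∀ t ∈ spectrum ℝ L, t ≠ 0 → c₀ * r ^ (-β) ≤ t)
    (W : B → ℝ) (hW : ∀ x, 0 ≤ W x ∧ W x ≤ (c₀ / 3) * r ^ (-β)) :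
    ∀ t ∈ spectrum ℝ (L + Matrix.diagonal W),
      (1 / (2 * (B.card : ℝ))) * ∑ x : B, W x ≤ t :=
  temple_truncated_anderson_general G B L hL c₀ r β hker hgap W hW
end
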